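/- arXiv:2009.06459 — 2 statements merged into one kernel-verified Lean document; each statement's English description precedes it below -/
import Mathlib

section
/- Let (Vᵏ)_{k≥0} be a nonnegative real sequence, ψ ∈ (0,1), ψ⁰ = 1, and γ₁, γ₂ ≥ 0. If V^{k+1} ≤ (1 − ψᵏ/2)⁻¹(Vᵏ + γ₁ψᵏ + γ₂ψ^{2k}) for all k ≥ 0, then the sequence (Vᵏ) is bounded: for all k, Vᵏ ≤ (∏_{j=0}^∞ (1 − ψʲ/2)⁻¹)·(V⁰ + γ₁/(1−ψ) + γ₂/(1−ψ²)). -/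
/-!
Unrolling the recursion gives the discrete Grönwall bound
`Vᵏ ≤ (∏_{j<k} aⱼ)(V⁰ + ∑_{j<k} bⱼ)` with `aⱼ = (1 - ψʲ/2)⁻¹ ≥ 1` and
`bⱼ = γ₁ψʲ + γ₂ψ^{2j} ≥ 0`. Since `aⱼ - 1 ≤ ψʲ` is summable, the partial products increase to
the convergent infinite product, and the partial sums of `bⱼ` are dominated by two geometric series.
-/

open Finset

section Gronwall

variable {V a b : ℕ → ℝ}

theorem le_prod_mul_add_sum_of_le_mul_add (ha : ∀ k, 1 ≤ a k) (hb : ∀ k, 0 ≤ b k)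
    (hrec : ∀ k, V (k + 1) ≤ a k * (V k + b k)) (k : ℕ) :
    V k ≤ (∏ j ∈ range k, a j) * (V 0 + ∑ j ∈ range k, b j) := by
  induction k with
  | zero => simp
  | succ k ih =>
    have hP : 1 ≤ ∏ j ∈ range k, a j := one_le_prod fun j _ => ha j
    calc V (k + 1) ≤ a k * (V k + b k) := hrec k
      _ ≤ a k * ((∏ j ∈ range k, a j) * (V 0 + ∑ j ∈ range k, b j)
            + (∏ j ∈ range k, a j) * b k) := by
        gcongr
        · exact zero_le_one.trans (ha k)
        · exact le_mul_of_one_le_left (hb k) hP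
      _ = (∏ j ∈ range (k + 1), a j) * (V 0 + ∑ j ∈ range (k + 1), b j) := by
        rw [prod_range_succ, sum_range_succ]
        ring

theorem prod_range_le_tprod_of_one_le (ha : ∀ k, 1 ≤ a k) (hmul : Multipliable a) (k : ℕ) :
    ∏ j ∈ range k, a j ≤ ∏' j, a j := by
  refine Monotone.ge_of_tendsto (monotone_nat_of_le_succ fun n => ?_) hmul.tendsto_prod_tprod_nat k
  rw [prod_range_succ]
  exact le_mul_of_one_le_right (prod_nonneg fun j _ => zero_le_one.trans (ha j)) (ha n)

theorem le_tprod_mul_of_le_mul_add {B : ℝ} (hV₀ : 0 ≤ V 0) (ha : ∀ k, 1 ≤ a k)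
    (hmul : Multipliable a) (hb : ∀ k, 0 ≤ b k) (hB : ∀ k, ∑ j ∈ range k, b j ≤ B)
    (hrec : ∀ k, V (k + 1) ≤ a k * (V k + b k)) (k : ℕ) :
    V k ≤ (∏' j, a j) * (V 0 + B) := by
  have hsum : 0 ≤ V 0 + ∑ j ∈ range k, b j := add_nonneg hV₀ (sum_nonneg fun j _ => hb j)
  calc V k ≤ (∏ j ∈ range k, a j) * (V 0 + ∑ j ∈ range k, b j) :=
        le_prod_mul_add_sum_of_le_mul_add ha hb hrec k
    _ ≤ (∏' j, a j) * (V 0 + B) := by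
        gcongr
        · simpa using zero_le_one.trans (prod_range_le_tprod_of_one_le ha hmul 0)
        · exact prod_range_le_tprod_of_one_le ha hmul k
        · exact hB k

end Gronwall

section HalfPow

variable {x ψ : ℝ}

theorem one_le_inv_one_sub_half (hx₀ : 0 ≤ x) (hx₁ : x < 2) : 1 ≤ (1 - x / 2)⁻¹ :=
  one_le_inv₀ (by linarith) |>.mpr (by linarith)

theorem inv_one_sub_half_le_one_add (hx₀ : 0 ≤ x) (hx₁ : x ≤ 1) : (1 - x / 2)⁻¹ ≤ 1 + x := by
  rw [inv_le_iff_one_le_mul₀ (by linarith)]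
  nlinarith

theorem one_le_inv_one_sub_half_pow (hψ₀ : 0 ≤ ψ) (hψ₁ : ψ ≤ 1) (j : ℕ) :
    1 ≤ (1 - ψ ^ j / 2)⁻¹ :=
  one_le_inv_one_sub_half (pow_nonneg hψ₀ j) ((pow_le_one₀ hψ₀ hψ₁).trans_lt one_lt_two)

theorem multipliable_inv_one_sub_half_pow (hψ₀ : 0 ≤ ψ) (hψ₁ : ψ < 1) :
    Multipliable fun j : ℕ => (1 - ψ ^ j / 2)⁻¹ := by
  have hsummable : Summable fun j : ℕ => (1 - ψ ^ j / 2)⁻¹ - 1 :=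
    (summable_geometric_of_lt_one hψ₀ hψ₁).of_nonneg_of_le
      (fun j => sub_nonneg.mpr (one_le_inv_one_sub_half_pow hψ₀ hψ₁.le j))
      (fun j => sub_le_iff_le_add'.mpr
        (inv_one_sub_half_le_one_add (pow_nonneg hψ₀ j) (pow_le_one₀ hψ₀ hψ₁.le)))
  simpa using Real.multipliable_one_add_of_summable hsummable

theorem sum_range_mul_pow_add_mul_pow_two_mul_le {γ₁ γ₂ : ℝ} (hψ₀ : 0 ≤ ψ) (hψ₁ : ψ < 1)
    (hγ₁ : 0 ≤ γ₁) (hγ₂ : 0 ≤ γ₂) (k : ℕ) :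
    ∑ j ∈ range k, (γ₁ * ψ ^ j + γ₂ * ψ ^ (2 * j)) ≤ γ₁ / (1 - ψ) + γ₂ / (1 - ψ ^ 2) := by
  have hgeom {x : ℝ} (hx₀ : 0 ≤ x) (hx₁ : x < 1) : ∑ j ∈ range k, x ^ j ≤ (1 - x)⁻¹ := by
    rw [range_eq_Ico]
    simpa using geom_sum_Ico_le_of_lt_one (m := 0) (n := k) hx₀ hx₁
  simp only [sum_add_distrib, ← mul_sum, pow_mul, div_eq_mul_inv]
  gcongr
  · exact hgeom hψ₀ hψ₁
  · exact hgeom (sq_nonneg ψ) (pow_lt_one₀ hψ₀ hψ₁ two_ne_zero)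

end HalfPow

/-- Recursive Lyapunov bound: if `V^{k+1} ≤ (1 - ψᵏ/2)⁻¹ (Vᵏ + γ₁ψᵏ + γ₂ψ^{2k})` for all `k`,
then `(Vᵏ)` is bounded by `(∏ⱼ (1 - ψʲ/2)⁻¹)(V⁰ + γ₁/(1-ψ) + γ₂/(1-ψ²))`. -/
theorem lyapunov_bounded (V : ℕ → ℝ) (ψ γ₁ γ₂ : ℝ)
    (hψ : ψ ∈ Set.Ioo (0 : ℝ) 1) (hγ₁ : 0 ≤ γ₁) (hγ₂ : 0 ≤ γ₂)
    (hV : ∀ k, 0 ≤ V k)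
    (hrec : ∀ k, V (k + 1) ≤ (1 - ψ ^ k / 2)⁻¹ * (V k + γ₁ * ψ ^ k + γ₂ * ψ ^ (2 * k))) :
    ∀ k, V k ≤ (∏' j : ℕ, (1 - ψ ^ j / 2)⁻¹) *
      (V 0 + γ₁ / (1 - ψ) + γ₂ / (1 - ψ ^ 2)) := by
  obtain ⟨hψ₀, hψ₁⟩ := hψ
  intro k
  rw [add_assoc]
  refine le_tprod_mul_of_le_mul_add (hV 0) (one_le_inv_one_sub_half_pow hψ₀.le hψ₁.le)
    (multipliable_inv_one_sub_half_pow hψ₀.le hψ₁) (fun j => by positivity)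
    (sum_range_mul_pow_add_mul_pow_two_mul_le hψ₀.le hψ₁ hγ₁ hγ₂) (fun j => ?_) k
  simpa only [add_assoc] using hrec j
end

section
/- Let (aᵏ)_{k≥0} and (Vᵏ)_{k≥0} be nonnegative real sequences, ψ ∈ (0,1), γ₁, γ₂ ≥ 0, and V̄ ≥ 0 with Vᵏ ≤ V̄ for all k. If aᵏ ≤ Vᵏ − (1 − ψᵏ/2)V^{k+1} + γ₁ψᵏ + γ₂ψ^{2k} for all k, then ∑_{k=0}^∞ aᵏ ≤ V⁰ + (V̄/2 + γ₁)/(1−ψ) + γ₂/(1−ψ²) < ∞, and hence aᵏ → 0. -/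
open Filter

/-- Summing a one-step Lyapunov decrease inequality with geometrically decaying
perturbations: the increments `aᵏ` are summable with the stated bound, hence `aᵏ → 0`. -/
theorem lyapunov_summable (a V : ℕ → ℝ) (ψ γ₁ γ₂ Vbar : ℝ)
    (hψ : ψ ∈ Set.Ioo (0 : ℝ) 1) (hγ₁ : 0 ≤ γ₁) (hγ₂ : 0 ≤ γ₂) (hVbar : 0 ≤ Vbar)
    (ha : ∀ k, 0 ≤ a k) (hV : ∀ k, 0 ≤ V k) (hVb : ∀ k, V k ≤ Vbar)
    (h : ∀ k, a k ≤ V k - (1 - ψ ^ k / 2) * V (k + 1) + γ₁ * ψ ^ k + γ₂ * ψ ^ (2 * k)) :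
    Summable a ∧
    (∑' k, a k) ≤ V 0 + (Vbar / 2 + γ₁) / (1 - ψ) + γ₂ / (1 - ψ ^ 2) ∧
    Tendsto a atTop (nhds 0) := by
  obtain ⟨hψ0, hψ1⟩ := hψ
  have hψ0' : (0:ℝ) ≤ ψ := le_of_lt hψ0
  have h1ψ : (0:ℝ) < 1 - ψ := by linarith
  have hψ2 : ψ ^ 2 < 1 := by nlinarith
  have hψ2' : (0:ℝ) ≤ ψ ^ 2 := by positivity
  have h1ψ2 : (0:ℝ) < 1 - ψ ^ 2 := by linarith
  -- pointwise bound
  have key : ∀ k, a k ≤ (V k - V (k + 1)) + (Vbar / 2 + γ₁) * ψ ^ k + γ₂ * (ψ ^ 2) ^ k := by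
    intro k
    have hpk : (0:ℝ) ≤ ψ ^ k := pow_nonneg hψ0' k
    have h1 : (ψ ^ k / 2) * V (k + 1) ≤ ψ ^ k * (Vbar / 2) := by
      have := hVb (k + 1)
      nlinarith [hV (k + 1)]
    have h2 : ψ ^ (2 * k) = (ψ ^ 2) ^ k := by rw [pow_mul]
    have := h k
    rw [h2] at this
    nlinarith
  -- partial sum bound
  have sum_bd : ∀ n, ∑ i ∈ Finset.range n, a i ≤
      V 0 + (Vbar / 2 + γ₁) / (1 - ψ) + γ₂ / (1 - ψ ^ 2) := by
    intro n
    have hsum : ∑ i ∈ Finset.range n, a i ≤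
        ∑ i ∈ Finset.range n, ((V i - V (i + 1)) + (Vbar / 2 + γ₁) * ψ ^ i + γ₂ * (ψ ^ 2) ^ i) :=
      Finset.sum_le_sum fun i _ => key i
    rw [Finset.sum_add_distrib, Finset.sum_add_distrib, Finset.sum_range_sub',
      ← Finset.mul_sum, ← Finset.mul_sum] at hsum
    have hg1 : ∑ i ∈ Finset.range n, ψ ^ i ≤ 1 / (1 - ψ) := by
      rw [geom_sum_eq (ne_of_lt hψ1)]
      have e : (ψ ^ n - 1) / (ψ - 1) = (1 - ψ ^ n) / (1 - ψ) := by
        rw [← neg_div_neg_eq]; ring_nf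
      rw [e]
      have : (0:ℝ) ≤ ψ ^ n := pow_nonneg hψ0' n
      gcongr
      linarith
    have hg2 : ∑ i ∈ Finset.range n, (ψ ^ 2) ^ i ≤ 1 / (1 - ψ ^ 2) := by
      rw [geom_sum_eq (ne_of_lt hψ2)]
      have e : ((ψ ^ 2) ^ n - 1) / (ψ ^ 2 - 1) = (1 - (ψ ^ 2) ^ n) / (1 - ψ ^ 2) := by
        rw [← neg_div_neg_eq]; ring_nf
      rw [e]
      have : (0:ℝ) ≤ (ψ ^ 2) ^ n := pow_nonneg hψ2' n
      gcongr
      linarith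
    have hb1 := mul_le_mul_of_nonneg_left hg1 (show (0:ℝ) ≤ Vbar / 2 + γ₁ by linarith)
    have hb2 := mul_le_mul_of_nonneg_left hg2 hγ₂
    have e1 : (Vbar / 2 + γ₁) * (1 / (1 - ψ)) = (Vbar / 2 + γ₁) / (1 - ψ) := by ring
    have e2 : γ₂ * (1 / (1 - ψ ^ 2)) = γ₂ / (1 - ψ ^ 2) := by ring
    have := hV n
    linarith
  have hs : Summable a := summable_of_sum_range_le ha sum_bd
  exact ⟨hs, Summable.tsum_le_of_sum_range_le hs sum_bd, hs.tendsto_atTop_zero⟩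
end
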